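/- Let $a>0$, $a\neq1$, $0<c<1$, $0<\beta<1$, and suppose the quartic $q$ has exactly two real roots $\gamma_1<\gamma_2$ with $\lambda_1=z(\gamma_1)<\lambda_2=z(\gamma_2)$. For real $z\notin[\lambda_1,\lambda_2]$ with $z\neq0$, the cubic $za\xi^3+((1+a)z+a(1-c))\xi^2+(z+1-c(1-\beta)+a(1-c\beta))\xi+1$ has three distinct real roots, and for $z\in(\lambda_1,\lambda_2)$ it has one real root and two non-real complex conjugate roots. -/

import Mathlib

open Complex

/-- The quartic numerator of `z'(ξ)`. -/
noncomputable def quartic (a c β x : ℝ) : ℝ :=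
  a^2*(1-c)*x^4 + 2*(a^2*(1-c*β) + a*(1-c*(1-β)))*x^3
    + (1-c*(1-β)+a^2*(1-c*β)+4*a)*x^2 + 2*(1+a)*x + 1

/-- The map `z(ξ)`. -/
noncomputable def zmap (a c β ξ : ℝ) : ℝ :=
  -1/ξ + c*(1-β)/(1+ξ) + c*a*β/(1+a*ξ)

/-- The cubic in `ξ` with parameter `z`, over `ℂ`. -/
noncomputable def cubicC (a c β : ℝ) (z ξ : ℂ) : ℂ :=
  z*(a:ℂ)*ξ^3 + (((1+a : ℝ):ℂ)*z + ((a*(1-c) : ℝ):ℂ))*ξ^2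
    + (z + ((1 - c*(1-β) + a*(1-c*β) : ℝ):ℂ))*ξ + 1

open Set Filter Topology ComplexConjugate

/-!
Away from the poles `0, -1, -1/a` of `z` the cubic factors as `P_z(ξ) = (z - z(ξ)) ξ(1+ξ)(1+aξ)`,
so its real roots are the real solutions of `z(ξ) = z`; moreover `z' = q / (ξ(1+ξ)(1+aξ))²`.
Since `q < 0` at `-1` and `-1/a` while `q > 0` near `-∞` and on `[0, ∞)`, the roots of `q` satisfy
`γ₁ < min(-1, -1/a)` and `max(-1, -1/a) < γ₂ < 0`. So `z` increases from `0` to `λ₁` on `(-∞, γ₁]`,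
decreases on `[γ₁, min(-1, -1/a))`, between the two poles and on `(max(-1, -1/a), γ₂]`, and
increases on `[γ₂, 0)`. For every `z`, `P_z` is negative at the left pole and positive at the right
one; its signs at `γ₁`, `γ₂`, `0` and far out (where `z(ξ)` is close to its limit `0` at `±∞`) are
read off from the factorization, and the intermediate value theorem gives three real roots when
`z ∉ [λ₁, λ₂]`. When `λ₁ < z < λ₂`, the only real solution of `z(ξ) = z` lies between the poles,
and it is not a triple root of `P_z`: a triple root is a critical point of `z`, i.e. a root of `q`,
but `q < 0` on `(γ₁, γ₂)`. The two other roots are therefore non-real and conjugate.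
-/

lemma IsPreconnected.pos_of_pos_of_forall_ne_zero {X : Type*} [TopologicalSpace X] {s : Set X}
    {f : X → ℝ} (hs : IsPreconnected s) (hf : ContinuousOn f s) (hf0 : ∀ x ∈ s, f x ≠ 0)
    {x y : X} (hx : x ∈ s) (hy : y ∈ s) (hfx : 0 < f x) : 0 < f y := by
  by_contra! hfy
  obtain ⟨t, ht, hft⟩ := hs.intermediate_value hy hx hf ⟨hfy, hfx.le⟩
  exact hf0 t ht hft

lemma cubic_eq_of_three_roots {K : Type*} [Field K] {A B C D r₁ r₂ r₃ : K}
    (h₁₂ : r₁ ≠ r₂) (h₁₃ : r₁ ≠ r₃) (h₂₃ : r₂ ≠ r₃)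
    (h₁ : A*r₁^3 + B*r₁^2 + C*r₁ + D = 0) (h₂ : A*r₂^3 + B*r₂^2 + C*r₂ + D = 0)
    (h₃ : A*r₃^3 + B*r₃^2 + C*r₃ + D = 0) (x : K) :
    A*x^3 + B*x^2 + C*x + D = A*(x - r₁)*(x - r₂)*(x - r₃) := by
  -- Vieta's formulas, obtained by dividing out the differences of the roots
  have k₁₂ : A*(r₁^2 + r₁*r₂ + r₂^2) + B*(r₁ + r₂) + C = 0 := by
    apply mul_left_cancel₀ (sub_ne_zero.mpr h₁₂)
    linear_combination h₁ - h₂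
  have k₁₃ : A*(r₁^2 + r₁*r₃ + r₃^2) + B*(r₁ + r₃) + C = 0 := by
    apply mul_left_cancel₀ (sub_ne_zero.mpr h₁₃)
    linear_combination h₁ - h₃
  have e₁ : A*(r₁ + r₂ + r₃) + B = 0 := by
    apply mul_left_cancel₀ (sub_ne_zero.mpr h₂₃)
    linear_combination k₁₂ - k₁₃
  have e₂ : A*(r₁*r₂ + r₁*r₃ + r₂*r₃) = C := by linear_combination (r₁ + r₂)*e₁ - k₁₂
  have e₃ : A*(r₁*r₂*r₃) = -D := by linear_combination h₁ - r₁^2*e₁ + r₁*e₂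
  linear_combination x^2*e₁ - x*e₂ + e₃

lemma cubic_eq_mul_quadratic {K : Type*} [Field K] {A B C D r : K} (hA : A ≠ 0)
    (hr : A*r^3 + B*r^2 + C*r + D = 0) (x : K) :
    A*x^3 + B*x^2 + C*x + D = A*(x - r)*(x^2 + (B/A + r)*x + (C/A + r*(B/A + r))) := by
  have hD : D = -(A*r^3 + B*r^2 + C*r) := by linear_combination hr
  rw [hD]
  field_simp
  ring

lemma quadratic_eq_mul_conj_of_discrim_neg {u v : ℝ} (h : discrim 1 u v < 0) :
    ∃ w : ℂ, w.im ≠ 0 ∧ ∀ x : ℂ, x^2 + u*x + v = (x - w)*(x - conj w) := by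
  rw [discrim] at h
  set s := √(4*v - u^2)
  have hs : (s : ℂ)^2 = 4*v - u^2 := by exact_mod_cast Real.sq_sqrt (by linarith)
  refine ⟨-u/2 + s/2 * I, ?_, fun x => ?_⟩
  · simpa [s] using (Real.sqrt_pos.2 (by linarith : 0 < 4*v - u^2)).ne'
  · simp only [map_add, map_mul, map_div₀, map_neg, conj_ofReal, conj_I, map_ofNat]
    linear_combination (-1/4 : ℂ) * hs + ((s : ℂ)^2/4) * I_sq

lemma cubic_eq_of_unique_real_root {A B C D r : ℝ} (hA : A ≠ 0)
    (hr : A*r^3 + B*r^2 + C*r + D = 0)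
    (huniq : ∀ s : ℝ, A*s^3 + B*s^2 + C*s + D = 0 → s = r)
    (hsimple : ¬ (B = -3*A*r ∧ C = 3*A*r^2 ∧ D = -A*r^3)) :
    ∃ w : ℂ, w.im ≠ 0 ∧
      ∀ x : ℂ, A*x^3 + B*x^2 + C*x + D = A*(x - r)*(x - w)*(x - conj w) := by
  set u := B/A + r with hu
  set v := C/A + r*u with hv
  have hdisc : discrim 1 u v < 0 := by
    by_contra! hd
    have root : ∀ t, t^2 + u*t + v = 0 → t = r := fun t ht =>
      huniq t (by rw [cubic_eq_mul_quadratic hA hr, ht, mul_zero])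
    -- the quadratic factor has a real root `s`, hence also `-u - s`, and both must be `r`
    obtain ⟨s, hs⟩ := exists_quadratic_eq_zero one_ne_zero
      ⟨√(discrim 1 u v), (Real.mul_self_sqrt hd).symm⟩
    have hsr := root s (by linear_combination hs)
    have hur : u = -2*r := by linarith [root (-u - s) (by linear_combination hs)]
    have hvr : v = r^2 := by rw [hsr, hur] at hs; linear_combination hs
    have hB : B = A*(u - r) := by rw [hu]; field_simp; ring
    have hC : C = A*(v - r*u) := by rw [hv, hu]; field_simp; ring
    refine hsimple ⟨?_, ?_, ?_⟩
    · rw [hB, hur]; ring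
    · rw [hC, hvr, hur]; ring
    · rw [hB, hur] at hr; rw [hC, hvr, hur] at hr; linear_combination hr
  obtain ⟨w, hw, hfac⟩ := quadratic_eq_mul_conj_of_discrim_neg hdisc
  refine ⟨w, hw, fun x => ?_⟩
  have hrC : (A : ℂ)*r^3 + B*r^2 + C*r + D = 0 := by exact_mod_cast hr
  calc (A*x^3 + B*x^2 + C*x + D : ℂ) = A*(x - r)*(x^2 + u*x + v) := by
        rw [cubic_eq_mul_quadratic (ofReal_ne_zero.2 hA) hrC]; push_cast [u, v]; ring
    _ = A*(x - r)*(x - w)*(x - conj w) := by rw [hfac]; ring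

structure AdmissibleParams (a c β : ℝ) : Prop where
  a_pos : 0 < a
  c_pos : 0 < c
  c_lt_one : c < 1
  β_pos : 0 < β
  β_lt_one : β < 1

noncomputable def cubicR (a c β z x : ℝ) : ℝ :=
  z*a*x^3 + ((1+a)*z + a*(1-c))*x^2 + (z + (1 - c*(1-β) + a*(1-c*β)))*x + 1

noncomputable def zmapDen (a x : ℝ) : ℝ := x*(1+x)*(1+a*x)

noncomputable def poleLeft (a : ℝ) : ℝ := min (-1) (-1/a)

noncomputable def poleRight (a : ℝ) : ℝ := max (-1) (-1/a)

section

variable {a c β z x : ℝ}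

lemma cubicC_ofReal (a c β z : ℝ) (x : ℂ) :
    cubicC a c β z x = (z*a : ℝ)*x^3 + ((1+a)*z + a*(1-c) : ℝ)*x^2
      + (z + (1 - c*(1-β) + a*(1-c*β)) : ℝ)*x + (1 : ℝ) := by
  unfold cubicC; push_cast; ring

lemma continuous_cubicR (a c β z : ℝ) : Continuous (cubicR a c β z) := by
  unfold cubicR; fun_prop

lemma cubicR_zero (a c β z : ℝ) : cubicR a c β z 0 = 1 := by simp [cubicR]

lemma cubicR_pos_of_nonneg (hp : AdmissibleParams a c β) (hz : 0 ≤ z) (hx : 0 ≤ x) :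
    0 < cubicR a c β z x := by
  obtain ⟨ha, hc0, hc1, hβ0, hβ1⟩ := hp
  have h₁ : 0 ≤ (1+a)*z + a*(1-c) := by nlinarith
  have h₂ : 0 ≤ z + (1 - c*(1-β) + a*(1-c*β)) := by
    nlinarith [mul_pos ha (mul_pos hc0 (sub_pos.2 hβ1)), mul_pos hc0 hβ0, mul_pos ha hc0]
  unfold cubicR
  have := mul_nonneg (mul_nonneg hz ha.le) (pow_nonneg hx 3)
  have := mul_nonneg h₁ (pow_nonneg hx 2)
  have := mul_nonneg h₂ hx
  linarith

lemma ne_zero_of_zmapDen_ne_zero (hx : zmapDen a x ≠ 0) : x ≠ 0 ∧ 1 + x ≠ 0 ∧ 1 + a*x ≠ 0 := by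
  simpa [zmapDen, not_or, and_assoc] using hx

lemma cubicR_eq_mul_zmapDen (a c β z : ℝ) (hx : zmapDen a x ≠ 0) :
    cubicR a c β z x = (z - zmap a c β x) * zmapDen a x := by
  obtain ⟨hx₀, hx₁, hxa⟩ := ne_zero_of_zmapDen_ne_zero hx
  unfold cubicR zmap zmapDen
  field_simp
  ring

lemma zmap_eq_of_cubicR_eq_zero (hx : zmapDen a x ≠ 0) (h : cubicR a c β z x = 0) :
    zmap a c β x = z := by
  rw [cubicR_eq_mul_zmapDen a c β z hx, mul_eq_zero, sub_eq_zero] at h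
  exact (h.resolve_right hx).symm

lemma hasDerivAt_zmap (a c β : ℝ) (hx : zmapDen a x ≠ 0) :
    HasDerivAt (zmap a c β) (quartic a c β x / zmapDen a x ^ 2) x := by
  obtain ⟨hx₀, hx₁, hxa⟩ := ne_zero_of_zmapDen_ne_zero hx
  have h₁ : HasDerivAt (fun ξ : ℝ => 1 + ξ) 1 x := (hasDerivAt_id x).const_add 1
  have h₂ : HasDerivAt (fun ξ : ℝ => 1 + a*ξ) a x := by
    simpa using ((hasDerivAt_id x).const_mul a).const_add 1
  refine ((((hasDerivAt_const x (-1 : ℝ)).div (hasDerivAt_id' x) hx₀).add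
    ((hasDerivAt_const x (c*(1-β))).div h₁ hx₁)).add
    ((hasDerivAt_const x (c*a*β)).div h₂ hxa)).congr_deriv ?_
  have hxa' : 1 + x*a ≠ 0 := by rwa [mul_comm]
  unfold quartic zmapDen
  field_simp
  ring

lemma strictMonoOn_zmap {s : Set ℝ} (hs : Convex ℝ s) (hden : ∀ x ∈ s, zmapDen a x ≠ 0)
    (hq : ∀ x ∈ interior s, 0 < quartic a c β x) : StrictMonoOn (zmap a c β) s := by
  refine strictMonoOn_of_deriv_pos hs
    (fun x hx => (hasDerivAt_zmap a c β (hden x hx)).continuousAt.continuousWithinAt)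
    fun x hx => ?_
  have hx₀ := hden x (interior_subset hx)
  rw [(hasDerivAt_zmap a c β hx₀).deriv]
  exact div_pos (hq x hx) (by positivity)

lemma strictAntiOn_zmap {s : Set ℝ} (hs : Convex ℝ s) (hden : ∀ x ∈ s, zmapDen a x ≠ 0)
    (hq : ∀ x ∈ interior s, quartic a c β x < 0) : StrictAntiOn (zmap a c β) s := by
  refine strictAntiOn_of_deriv_neg hs
    (fun x hx => (hasDerivAt_zmap a c β (hden x hx)).continuousAt.continuousWithinAt)
    fun x hx => ?_
  have hx₀ := hden x (interior_subset hx)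
  rw [(hasDerivAt_zmap a c β hx₀).deriv]
  exact div_neg_of_neg_of_pos (hq x hx) (by positivity)

lemma tendsto_zmap_atBot (c β : ℝ) (ha : 0 < a) : Tendsto (zmap a c β) atBot (𝓝 0) := by
  have h₁ : Tendsto (fun ξ : ℝ => 1 + ξ) atBot atBot := tendsto_atBot_add_const_left _ 1 tendsto_id
  have h₂ : Tendsto (fun ξ : ℝ => 1 + a*ξ) atBot atBot :=
    tendsto_atBot_add_const_left _ 1 (tendsto_id.const_mul_atBot ha)
  unfold zmap
  simpa using ((tendsto_const_nhds.div_atBot tendsto_id).add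
    (tendsto_const_nhds.div_atBot h₁)).add (tendsto_const_nhds.div_atBot h₂)

lemma tendsto_zmap_atTop (c β : ℝ) (ha : 0 < a) : Tendsto (zmap a c β) atTop (𝓝 0) := by
  have h₁ : Tendsto (fun ξ : ℝ => 1 + ξ) atTop atTop := tendsto_atTop_add_const_left _ 1 tendsto_id
  have h₂ : Tendsto (fun ξ : ℝ => 1 + a*ξ) atTop atTop :=
    tendsto_atTop_add_const_left _ 1 (tendsto_id.const_mul_atTop ha)
  unfold zmap
  simpa using ((tendsto_const_nhds.div_atTop tendsto_id).add
    (tendsto_const_nhds.div_atTop h₁)).add (tendsto_const_nhds.div_atTop h₂)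

lemma poleLeft_le_poleRight : poleLeft a ≤ poleRight a := min_le_max

lemma poleLeft_lt_poleRight (ha1 : a ≠ 1) : poleLeft a < poleRight a := by
  refine min_lt_max.2 fun h => ha1 ?_
  have ha : a ≠ 0 := by rintro rfl; norm_num at h
  field_simp at h
  linarith

lemma poleRight_neg (ha : 0 < a) : poleRight a < 0 :=
  max_lt (by norm_num) (div_neg_of_neg_of_pos (by norm_num) ha)

lemma zmapDen_eq (ha : a ≠ 0) (x : ℝ) :
    zmapDen a x = a * x * ((x - poleLeft a) * (x - poleRight a)) := by
  have h : (x - poleLeft a) * (x - poleRight a) = (x + 1) * (x + 1/a) := by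
    rcases le_total (-1) (-1/a) with h | h
    · simp only [poleLeft, poleRight, min_eq_left h, max_eq_right h]; ring
    · simp only [poleLeft, poleRight, min_eq_right h, max_eq_left h]; ring
  rw [h, zmapDen]
  field_simp
  ring

lemma zmapDen_neg_of_lt_poleLeft (ha : 0 < a) (hx : x < poleLeft a) : zmapDen a x < 0 := by
  have hM := poleRight_neg ha
  have hmM : poleLeft a ≤ poleRight a := poleLeft_le_poleRight
  rw [zmapDen_eq ha.ne']
  exact mul_neg_of_neg_of_pos (mul_neg_of_pos_of_neg ha (by linarith))
    (mul_pos_of_neg_of_neg (by linarith) (by linarith))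

lemma zmapDen_pos_of_mem_Ioo (ha : 0 < a) (hx : x ∈ Ioo (poleLeft a) (poleRight a)) :
    0 < zmapDen a x := by
  have hM := poleRight_neg ha
  rw [zmapDen_eq ha.ne']
  exact mul_pos_of_neg_of_neg (mul_neg_of_pos_of_neg ha (by linarith [hx.2]))
    (mul_neg_of_pos_of_neg (by linarith [hx.1]) (by linarith [hx.2]))

lemma zmapDen_neg_of_mem_Ioo (ha : 0 < a) (hx : x ∈ Ioo (poleRight a) 0) : zmapDen a x < 0 := by
  have hmM : poleLeft a ≤ poleRight a := poleLeft_le_poleRight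
  rw [zmapDen_eq ha.ne']
  exact mul_neg_of_neg_of_pos (mul_neg_of_pos_of_neg ha hx.2)
    (mul_pos (by linarith [hx.1]) (by linarith [hx.1]))

lemma zmapDen_pos_of_pos (ha : 0 < a) (hx : 0 < x) : 0 < zmapDen a x := by
  unfold zmapDen; positivity

lemma cubicR_neg_one : cubicR a c β z (-1) = c*(1-β)*(1-a) := by unfold cubicR; ring

lemma cubicR_neg_inv (ha : a ≠ 0) : cubicR a c β z (-1/a) = c*β*(a-1)/a := by
  unfold cubicR; field_simp; ring

lemma cubicR_poleLeft_neg (hp : AdmissibleParams a c β) (ha1 : a ≠ 1) :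
    cubicR a c β z (poleLeft a) < 0 := by
  obtain ⟨ha, hc0, -, hβ0, hβ1⟩ := hp
  rcases ha1.lt_or_gt with h | h
  · have : -1/a ≤ -1 := by rw [div_le_iff₀ ha]; linarith
    rw [poleLeft, min_eq_right this, cubicR_neg_inv ha.ne']
    exact div_neg_of_neg_of_pos (mul_neg_of_pos_of_neg (mul_pos hc0 hβ0) (by linarith)) ha
  · have : -1 ≤ -1/a := by rw [le_div_iff₀ ha]; linarith
    rw [poleLeft, min_eq_left this, cubicR_neg_one]
    exact mul_neg_of_pos_of_neg (mul_pos hc0 (by linarith)) (by linarith)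

lemma cubicR_poleRight_pos (hp : AdmissibleParams a c β) (ha1 : a ≠ 1) :
    0 < cubicR a c β z (poleRight a) := by
  obtain ⟨ha, hc0, -, hβ0, hβ1⟩ := hp
  rcases ha1.lt_or_gt with h | h
  · have : -1/a ≤ -1 := by rw [div_le_iff₀ ha]; linarith
    rw [poleRight, max_eq_left this, cubicR_neg_one]
    exact mul_pos (mul_pos hc0 (by linarith)) (by linarith)
  · have : -1 ≤ -1/a := by rw [le_div_iff₀ ha]; linarith
    rw [poleRight, max_eq_right this, cubicR_neg_inv ha.ne']
    exact div_pos (mul_pos (mul_pos hc0 hβ0) (by linarith)) ha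

lemma quartic_neg_one_neg (hp : AdmissibleParams a c β) (ha1 : a ≠ 1) :
    quartic a c β (-1) < 0 := by
  have h : quartic a c β (-1) = -(c*(1-β)*(a-1)^2) := by unfold quartic; ring
  have : 0 < (a-1)^2 := by positivity [sub_ne_zero.2 ha1]
  rw [h, neg_neg_iff_pos]
  exact mul_pos (mul_pos hp.c_pos (sub_pos.2 hp.β_lt_one)) this

lemma quartic_neg_inv_neg (hp : AdmissibleParams a c β) (ha1 : a ≠ 1) :
    quartic a c β (-1/a) < 0 := by
  have h : quartic a c β (-1/a) = -(c*β*(a-1)^2/a^2) := by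
    unfold quartic; field_simp [hp.a_pos.ne']; ring
  have : 0 < (a-1)^2 := by positivity [sub_ne_zero.2 ha1]
  rw [h, neg_neg_iff_pos]
  exact div_pos (mul_pos (mul_pos hp.c_pos hp.β_pos) this) (by positivity [hp.a_pos])

lemma quartic_poleLeft_neg (hp : AdmissibleParams a c β) (ha1 : a ≠ 1) :
    quartic a c β (poleLeft a) < 0 := by
  rcases min_choice (-1 : ℝ) (-1/a) with h | h <;> rw [poleLeft, h]
  exacts [quartic_neg_one_neg hp ha1, quartic_neg_inv_neg hp ha1]

lemma quartic_poleRight_neg (hp : AdmissibleParams a c β) (ha1 : a ≠ 1) :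
    quartic a c β (poleRight a) < 0 := by
  rcases max_choice (-1 : ℝ) (-1/a) with h | h <;> rw [poleRight, h]
  exacts [quartic_neg_one_neg hp ha1, quartic_neg_inv_neg hp ha1]

lemma quartic_pos_of_nonneg (hp : AdmissibleParams a c β) (hx : 0 ≤ x) :
    0 < quartic a c β x := by
  obtain ⟨ha, hc0, hc1, hβ0, hβ1⟩ := hp
  have hcβ : c*β < 1 := by nlinarith
  have hcβ' : c*(1-β) < 1 := by nlinarith
  unfold quartic
  have := mul_nonneg (mul_nonneg (sq_nonneg a) (sub_pos.2 hc1).le) (pow_nonneg hx 4)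
  have := mul_nonneg (by nlinarith [mul_pos ha ha] : 0 ≤ 2*(a^2*(1-c*β) + a*(1-c*(1-β))))
    (pow_nonneg hx 3)
  have := mul_nonneg (by nlinarith [mul_pos ha ha] : 0 ≤ 1-c*(1-β)+a^2*(1-c*β)+4*a)
    (sq_nonneg x)
  have := mul_nonneg (by linarith : 0 ≤ 2*(1+a)) hx
  linarith

lemma eventually_quartic_pos_atBot (hp : AdmissibleParams a c β) :
    ∀ᶠ x in atBot, 0 < quartic a c β x := by
  obtain ⟨ha, hc0, hc1, hβ0, hβ1⟩ := hp
  set A := a^2*(1-c)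
  set B := 2*(a^2*(1-c*β) + a*(1-c*(1-β)))
  set C := 1-c*(1-β)+a^2*(1-c*β)+4*a
  set D := 2*(1+a)
  have hA : 0 < A := mul_pos (by positivity) (sub_pos.2 hc1)
  have hC : 0 ≤ C := by nlinarith [mul_pos ha ha, mul_pos hc0 hβ0]
  have hlin : ∀ᶠ x in atBot, A*x + (B + D) ≤ 0 :=
    (tendsto_atBot_add_const_right _ _ (tendsto_id.const_mul_atBot hA)).eventually
      (eventually_le_atBot 0)
  -- for `x ≤ -1` with `A x + B ≤ -D`: `x³ (A x + B) ≥ -D x³ ≥ -D x`, so `q x ≥ C x² + 1`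
  filter_upwards [hlin, eventually_le_atBot (-1)] with x hx hx1
  have h₁ : x^3*(-D) ≤ x^3*(A*x + B) :=
    mul_le_mul_of_nonpos_left (by linarith) (by nlinarith [sq_nonneg x])
  have h₂ : 0 ≤ D*((-x)*(x^2 - 1)) :=
    mul_nonneg (by positivity) (mul_nonneg (by linarith) (by nlinarith))
  have h₃ : 0 ≤ C*x^2 := mul_nonneg hC (sq_nonneg x)
  have : quartic a c β x = x^3*(A*x + B) + C*x^2 + D*x + 1 := by unfold quartic; ring
  nlinarith

lemma cubicR_pos_of_zmapDen_neg (hden : zmapDen a x < 0) (h : z < zmap a c β x) :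
    0 < cubicR a c β z x := by
  rw [cubicR_eq_mul_zmapDen a c β z hden.ne]
  exact mul_pos_of_neg_of_neg (sub_neg.2 h) hden

lemma cubicR_neg_of_zmapDen_neg (hden : zmapDen a x < 0) (h : zmap a c β x < z) :
    cubicR a c β z x < 0 := by
  rw [cubicR_eq_mul_zmapDen a c β z hden.ne]
  exact mul_neg_of_pos_of_neg (sub_pos.2 h) hden

lemma cubicR_neg_of_zmapDen_pos (hden : 0 < zmapDen a x) (h : z < zmap a c β x) :
    cubicR a c β z x < 0 := by
  rw [cubicR_eq_mul_zmapDen a c β z hden.ne']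
  exact mul_neg_of_neg_of_pos (sub_neg.2 h) hden

-- A triple root `r` of `cubicR a c β z` is a critical point of `zmap`, as
-- `cubicR a c β z x = (z - zmap a c β x) * zmapDen a x`.
lemma quartic_eq_zero_of_triple_root {r : ℝ} (E₁ : (1+a)*z + a*(1-c) = -3*(z*a)*r)
    (E₂ : z + (1 - c*(1-β) + a*(1-c*β)) = 3*(z*a)*r^2) (E₃ : (1 : ℝ) = -(z*a)*r^3) :
    quartic a c β r = 0 := by
  unfold quartic
  linear_combination ((3*a*r^2+2*(1+a)*r+1)*r^2 - 2*r*(r*(1+r)*(1+a*r)))*E₁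
    + ((3*a*r^2+2*(1+a)*r+1)*r - r*(1+r)*(1+a*r))*E₂ + (3*a*r^2+2*(1+a)*r+1)*E₃

lemma exists_cubicR_eq_zero_mem_Ioo_poles (hp : AdmissibleParams a c β) (ha1 : a ≠ 1) (z : ℝ) :
    ∃ r ∈ Ioo (poleLeft a) (poleRight a), cubicR a c β z r = 0 :=
  intermediate_value_Ioo (poleLeft_lt_poleRight ha1).le (continuous_cubicR a c β z).continuousOn
    ⟨cubicR_poleLeft_neg hp ha1, cubicR_poleRight_pos hp ha1⟩

lemma exists_three_roots_of_lt_zmap (hp : AdmissibleParams a c β) (ha1 : a ≠ 1) {γ : ℝ}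
    (hγ : γ < poleLeft a) (hz : z ≠ 0) (hzγ : z < zmap a c β γ) :
    ∃ r₁ r₂ r₃ : ℝ, r₁ < r₂ ∧ r₂ < r₃ ∧
      cubicR a c β z r₁ = 0 ∧ cubicR a c β z r₂ = 0 ∧ cubicR a c β z r₃ = 0 := by
  have ha := hp.a_pos
  have hcont := continuous_cubicR a c β z
  obtain ⟨r, ⟨hmr, hrM⟩, hr⟩ := exists_cubicR_eq_zero_mem_Ioo_poles hp ha1 z
  have hγpos := cubicR_pos_of_zmapDen_neg (zmapDen_neg_of_lt_poleLeft ha hγ) hzγ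
  obtain ⟨s, ⟨hγs, hsm⟩, hs⟩ :=
    intermediate_value_Ioo' hγ.le hcont.continuousOn ⟨cubicR_poleLeft_neg hp ha1, hγpos⟩
  -- the third root comes from `zmap → 0` at `+∞` if `z < 0`, at `-∞` if `z > 0`
  rcases hz.lt_or_gt with hneg | hpos
  · obtain ⟨x, hx, hxz⟩ := ((eventually_gt_atTop 0).and
      ((tendsto_zmap_atTop c β ha).eventually (lt_mem_nhds hneg))).exists
    obtain ⟨t, ⟨ht, -⟩, ht₀⟩ := intermediate_value_Ioo' hx.le hcont.continuousOn
      ⟨cubicR_neg_of_zmapDen_pos (zmapDen_pos_of_pos ha hx) hxz, by simp [cubicR_zero]⟩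
    exact ⟨s, r, t, hsm.trans hmr, (hrM.trans (poleRight_neg ha)).trans ht, hs, hr, ht₀⟩
  · obtain ⟨x, hx, hxz⟩ := ((eventually_lt_atBot γ).and
      ((tendsto_zmap_atBot c β ha).eventually (gt_mem_nhds hpos))).exists
    obtain ⟨t, ⟨-, ht⟩, ht₀⟩ := intermediate_value_Ioo hx.le hcont.continuousOn
      ⟨cubicR_neg_of_zmapDen_neg (zmapDen_neg_of_lt_poleLeft ha (hx.trans hγ)) hxz, hγpos⟩
    exact ⟨t, s, r, ht.trans hγs, hsm.trans hmr, ht₀, hs, hr⟩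

lemma exists_three_roots_of_zmap_lt (hp : AdmissibleParams a c β) (ha1 : a ≠ 1) {γ : ℝ}
    (hγ : poleRight a < γ) (hγ₀ : γ < 0) (hzγ : zmap a c β γ < z) :
    ∃ r₁ r₂ r₃ : ℝ, r₁ < r₂ ∧ r₂ < r₃ ∧
      cubicR a c β z r₁ = 0 ∧ cubicR a c β z r₂ = 0 ∧ cubicR a c β z r₃ = 0 := by
  have hcont := continuous_cubicR a c β z
  obtain ⟨r, ⟨-, hrM⟩, hr⟩ := exists_cubicR_eq_zero_mem_Ioo_poles hp ha1 z
  have hγneg := cubicR_neg_of_zmapDen_neg (zmapDen_neg_of_mem_Ioo hp.a_pos ⟨hγ, hγ₀⟩) hzγ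
  obtain ⟨s, ⟨hMs, hsγ⟩, hs⟩ :=
    intermediate_value_Ioo' hγ.le hcont.continuousOn ⟨hγneg, cubicR_poleRight_pos hp ha1⟩
  obtain ⟨t, ⟨hγt, -⟩, ht⟩ := intermediate_value_Ioo hγ₀.le hcont.continuousOn
    ⟨hγneg, by simp [cubicR_zero]⟩
  exact ⟨r, s, t, hrM.trans hMs, hsγ.trans hγt, hr, hs, ht⟩

lemma cubicC_eq_of_three_roots {r₁ r₂ r₃ : ℝ} (h₁₂ : r₁ < r₂) (h₂₃ : r₂ < r₃)
    (hr₁ : cubicR a c β z r₁ = 0) (hr₂ : cubicR a c β z r₂ = 0) (hr₃ : cubicR a c β z r₃ = 0)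
    (ξ : ℂ) : cubicC a c β z ξ = z*a*(ξ - r₁)*(ξ - r₂)*(ξ - r₃) := by
  rw [cubicC_ofReal]
  refine (cubic_eq_of_three_roots (r₁ := (r₁ : ℂ)) (r₂ := r₂) (r₃ := r₃)
    (by exact_mod_cast h₁₂.ne) (by exact_mod_cast (h₁₂.trans h₂₃).ne)
    (by exact_mod_cast h₂₃.ne) (by exact_mod_cast hr₁) (by exact_mod_cast hr₂)
    (by exact_mod_cast hr₃) ξ).trans (by push_cast; ring)

end

structure QuarticRootConfig (a c β γ₁ γ₂ : ℝ) : Prop where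
  lt_poleLeft : γ₁ < poleLeft a
  poleRight_lt : poleRight a < γ₂
  neg : γ₂ < 0
  quartic_pos_of_lt : ∀ x < γ₁, 0 < quartic a c β x
  quartic_neg_of_mem_Ioo : ∀ x ∈ Ioo γ₁ γ₂, quartic a c β x < 0
  quartic_pos_of_gt : ∀ x, γ₂ < x → 0 < quartic a c β x

section

variable {a c β γ₁ γ₂ : ℝ}

lemma quarticRootConfig_of_roots (hp : AdmissibleParams a c β) (ha1 : a ≠ 1) (hlt : γ₁ < γ₂)
    (hq₁ : quartic a c β γ₁ = 0) (hq₂ : quartic a c β γ₂ = 0)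
    (honly : ∀ x, quartic a c β x = 0 → x = γ₁ ∨ x = γ₂) : QuarticRootConfig a c β γ₁ γ₂ := by
  have hcont : Continuous (quartic a c β) := by unfold quartic; fun_prop
  have hne : ∀ x, x ≠ γ₁ → x ≠ γ₂ → quartic a c β x ≠ 0 := fun x h₁ h₂ h =>
    (honly x h).elim h₁ h₂
  have pos_of_lt : ∀ x < γ₁, 0 < quartic a c β x := fun x hx => by
    obtain ⟨y, hy, hyx⟩ := ((eventually_quartic_pos_atBot hp).and (eventually_lt_atBot x)).exists
    exact isPreconnected_Iio.pos_of_pos_of_forall_ne_zero hcont.continuousOn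
      (fun t ht => hne t ht.ne (ht.trans hlt).ne) (hyx.trans hx) hx hy
  have pos_of_gt : ∀ x, γ₂ < x → 0 < quartic a c β x := fun x hx =>
    isPreconnected_Ioi.pos_of_pos_of_forall_ne_zero hcont.continuousOn
      (fun t ht => hne t (hlt.trans ht).ne' ht.ne') (lt_max_of_lt_left hx) hx
      (quartic_pos_of_nonneg hp (le_max_right x 0))
  have lt_poleLeft : γ₁ < poleLeft a :=
    lt_of_le_of_ne (not_lt.1 fun h => (pos_of_lt _ h).not_gt (quartic_poleLeft_neg hp ha1))
      fun h => (quartic_poleLeft_neg hp ha1).ne (h ▸ hq₁)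
  have poleRight_lt : poleRight a < γ₂ :=
    lt_of_le_of_ne (not_lt.1 fun h => (pos_of_gt _ h).not_gt (quartic_poleRight_neg hp ha1))
      fun h => (quartic_poleRight_neg hp ha1).ne (h ▸ hq₂)
  refine ⟨lt_poleLeft, poleRight_lt, lt_of_not_ge fun h => (quartic_pos_of_nonneg hp h).ne' hq₂,
    pos_of_lt, fun x hx => ?_, pos_of_gt⟩
  -- on `(γ₁, γ₂)` the quartic keeps the sign it has at the pole `poleLeft a`
  have hm : poleLeft a ∈ Ioo γ₁ γ₂ := ⟨lt_poleLeft, poleLeft_le_poleRight.trans_lt poleRight_lt⟩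
  refine lt_of_not_ge fun h => (quartic_poleLeft_neg hp ha1).not_gt ?_
  exact isPreconnected_Ioo.pos_of_pos_of_forall_ne_zero hcont.continuousOn
    (fun t ht => hne t ht.1.ne' ht.2.ne) hx hm (lt_of_le_of_ne h (hne x hx.1.ne' hx.2.ne).symm)

end

namespace QuarticRootConfig

variable {a c β γ₁ γ₂ : ℝ}

lemma strictMonoOn_Iic (hγ : QuarticRootConfig a c β γ₁ γ₂) (ha : 0 < a) :
    StrictMonoOn (zmap a c β) (Iic γ₁) :=
  strictMonoOn_zmap (convex_Iic γ₁)
    (fun x hx => (zmapDen_neg_of_lt_poleLeft ha (hx.trans_lt hγ.lt_poleLeft)).ne)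
    (fun x hx => hγ.quartic_pos_of_lt x (by rwa [interior_Iic] at hx))

lemma strictAntiOn_Ioo (hγ : QuarticRootConfig a c β γ₁ γ₂) (ha : 0 < a) :
    StrictAntiOn (zmap a c β) (Ioo (poleLeft a) (poleRight a)) :=
  strictAntiOn_zmap (convex_Ioo _ _) (fun x hx => (zmapDen_pos_of_mem_Ioo ha hx).ne')
    fun x hx => by
      rw [interior_Ioo] at hx
      exact hγ.quartic_neg_of_mem_Ioo x ⟨hγ.lt_poleLeft.trans hx.1, hx.2.trans hγ.poleRight_lt⟩

lemma zmap_le_of_lt_poleLeft (hγ : QuarticRootConfig a c β γ₁ γ₂) (ha : 0 < a) {x : ℝ}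
    (hx : x < poleLeft a) : zmap a c β x ≤ zmap a c β γ₁ := by
  rcases le_total x γ₁ with h | h
  · exact (hγ.strictMonoOn_Iic ha).monotoneOn h self_mem_Iic h
  have hanti : StrictAntiOn (zmap a c β) (Ico γ₁ (poleLeft a)) :=
    strictAntiOn_zmap (convex_Ico _ _) (fun y hy => (zmapDen_neg_of_lt_poleLeft ha hy.2).ne)
      fun y hy => by
        rw [interior_Ico] at hy
        exact hγ.quartic_neg_of_mem_Ioo y
          ⟨hy.1, hy.2.trans (poleLeft_le_poleRight.trans_lt hγ.poleRight_lt)⟩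
  exact hanti.antitoneOn ⟨le_rfl, hγ.lt_poleLeft⟩ ⟨h, hx⟩ h

lemma le_zmap_of_mem_Ioo (hγ : QuarticRootConfig a c β γ₁ γ₂) (ha : 0 < a) {x : ℝ}
    (hx : x ∈ Ioo (poleRight a) 0) : zmap a c β γ₂ ≤ zmap a c β x := by
  rcases le_total x γ₂ with h | h
  · have hanti : StrictAntiOn (zmap a c β) (Ioc (poleRight a) γ₂) :=
      strictAntiOn_zmap (convex_Ioc _ _)
        (fun y hy => (zmapDen_neg_of_mem_Ioo ha ⟨hy.1, hy.2.trans_lt hγ.neg⟩).ne)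
        fun y hy => by
          rw [interior_Ioc] at hy
          exact hγ.quartic_neg_of_mem_Ioo y
            ⟨(hγ.lt_poleLeft.trans_le poleLeft_le_poleRight).trans hy.1, hy.2⟩
    exact hanti.antitoneOn ⟨hx.1, h⟩ ⟨hγ.poleRight_lt, le_rfl⟩ h
  · have hmono : StrictMonoOn (zmap a c β) (Ico γ₂ 0) :=
      strictMonoOn_zmap (convex_Ico _ _)
        (fun y hy => (zmapDen_neg_of_mem_Ioo ha ⟨hγ.poleRight_lt.trans_le hy.1, hy.2⟩).ne)
        fun y hy => by
          rw [interior_Ico] at hy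
          exact hγ.quartic_pos_of_gt y hy.1
    exact hmono.monotoneOn ⟨le_rfl, hγ.neg⟩ ⟨h, hx.2⟩ h

-- `z` increases from its limit `0` at `-∞` up to `zmap γ₁`
lemma zmap_pos (hγ : QuarticRootConfig a c β γ₁ γ₂) (ha : 0 < a) : 0 < zmap a c β γ₁ := by
  have hmono := hγ.strictMonoOn_Iic ha
  have h₀ : 0 ≤ zmap a c β (γ₁ - 1) :=
    le_of_tendsto (tendsto_zmap_atBot c β ha) (eventually_atBot.2 ⟨γ₁ - 1, fun x hx =>
      hmono.monotoneOn (mem_Iic.2 (by linarith)) (mem_Iic.2 (by linarith)) hx⟩)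
  exact h₀.trans_lt (hmono (mem_Iic.2 (by linarith)) self_mem_Iic (by linarith))

lemma eq_of_cubicR_eq_zero (hγ : QuarticRootConfig a c β γ₁ γ₂) (hp : AdmissibleParams a c β)
    (ha1 : a ≠ 1) {z r s : ℝ} (hz₁ : zmap a c β γ₁ < z) (hz₂ : z < zmap a c β γ₂)
    (hr : r ∈ Ioo (poleLeft a) (poleRight a)) (hr₀ : cubicR a c β z r = 0)
    (hs₀ : cubicR a c β z s = 0) : s = r := by
  have ha := hp.a_pos
  have hs : s < 0 := lt_of_not_ge fun h =>
    (cubicR_pos_of_nonneg hp ((hγ.zmap_pos ha).trans hz₁).le h).ne' hs₀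
  rcases lt_trichotomy s (poleLeft a) with hsm | rfl | hms
  · have := zmap_eq_of_cubicR_eq_zero (zmapDen_neg_of_lt_poleLeft ha hsm).ne hs₀
    linarith [hγ.zmap_le_of_lt_poleLeft ha hsm]
  · exact absurd hs₀ (cubicR_poleLeft_neg hp ha1).ne
  rcases lt_trichotomy s (poleRight a) with hsM | rfl | hMs
  · refine (hγ.strictAntiOn_Ioo ha).injOn ⟨hms, hsM⟩ hr ?_
    rw [zmap_eq_of_cubicR_eq_zero (zmapDen_pos_of_mem_Ioo ha ⟨hms, hsM⟩).ne' hs₀,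
      zmap_eq_of_cubicR_eq_zero (zmapDen_pos_of_mem_Ioo ha hr).ne' hr₀]
  · exact absurd hs₀ (cubicR_poleRight_pos hp ha1).ne'
  · have := zmap_eq_of_cubicR_eq_zero (zmapDen_neg_of_mem_Ioo ha ⟨hMs, hs⟩).ne hs₀
    linarith [hγ.le_zmap_of_mem_Ioo ha ⟨hMs, hs⟩]

lemma exists_conj_roots (hγ : QuarticRootConfig a c β γ₁ γ₂) (hp : AdmissibleParams a c β)
    (ha1 : a ≠ 1) {z : ℝ} (hz₁ : zmap a c β γ₁ < z) (hz₂ : z < zmap a c β γ₂) :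
    ∃ (r : ℝ) (w : ℂ), w.im ≠ 0 ∧
      ∀ ξ : ℂ, cubicC a c β z ξ = z*a*(ξ - r)*(ξ - w)*(ξ - conj w) := by
  have hz : 0 < z := (hγ.zmap_pos hp.a_pos).trans hz₁
  obtain ⟨r, hr, hr₀⟩ := exists_cubicR_eq_zero_mem_Ioo_poles hp ha1 z
  have hrγ : r ∈ Ioo γ₁ γ₂ := ⟨hγ.lt_poleLeft.trans hr.1, hr.2.trans hγ.poleRight_lt⟩
  obtain ⟨w, hw, hfac⟩ := cubic_eq_of_unique_real_root (mul_pos hz hp.a_pos).ne' hr₀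
    (fun s hs => hγ.eq_of_cubicR_eq_zero hp ha1 hz₁ hz₂ hr hr₀ hs)
    fun ⟨E₁, E₂, E₃⟩ =>
      (hγ.quartic_neg_of_mem_Ioo r hrγ).ne (quartic_eq_zero_of_triple_root E₁ E₂ E₃)
  exact ⟨r, w, hw, fun ξ => by rw [cubicC_ofReal, hfac]; push_cast; ring⟩

end QuarticRootConfig

theorem roots_real_or_complex_general
    (a c β : ℝ) (ha : 0 < a) (ha1 : a ≠ 1) (hc0 : 0 < c) (hc1 : c < 1)
    (hβ0 : 0 < β) (hβ1 : β < 1)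
    (γ1 γ2 : ℝ) (hlt : γ1 < γ2)
    (hq1 : quartic a c β γ1 = 0) (hq2 : quartic a c β γ2 = 0)
    (honly : ∀ x : ℝ, quartic a c β x = 0 → x = γ1 ∨ x = γ2) :
    (∀ z : ℝ, z ≠ 0 → (z < zmap a c β γ1 ∨ zmap a c β γ2 < z) →
      ∃ r1 r2 r3 : ℝ, r1 ≠ r2 ∧ r1 ≠ r3 ∧ r2 ≠ r3 ∧
        ∀ ξ : ℂ, cubicC a c β (z:ℂ) ξ
          = (z:ℂ)*(a:ℂ)*(ξ - (r1:ℂ))*(ξ - (r2:ℂ))*(ξ - (r3:ℂ))) ∧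
    (∀ z : ℝ, zmap a c β γ1 < z → z < zmap a c β γ2 →
      ∃ (r : ℝ) (w : ℂ), w.im ≠ 0 ∧
        ∀ ξ : ℂ, cubicC a c β (z:ℂ) ξ
          = (z:ℂ)*(a:ℂ)*(ξ - (r:ℂ))*(ξ - w)*(ξ - starRingEnd ℂ w)) := by
  have hp : AdmissibleParams a c β := ⟨ha, hc0, hc1, hβ0, hβ1⟩
  have hγ := quarticRootConfig_of_roots hp ha1 hlt hq1 hq2 honly
  refine ⟨fun z hz hout => ?_, fun z hz₁ hz₂ => hγ.exists_conj_roots hp ha1 hz₁ hz₂⟩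
  obtain ⟨r₁, r₂, r₃, h₁₂, h₂₃, hr₁, hr₂, hr₃⟩ := hout.elim
    (exists_three_roots_of_lt_zmap hp ha1 hγ.lt_poleLeft hz)
    (exists_three_roots_of_zmap_lt hp ha1 hγ.poleRight_lt hγ.neg)
  exact ⟨r₁, r₂, r₃, h₁₂.ne, (h₁₂.trans h₂₃).ne, h₂₃.ne,
    cubicC_eq_of_three_roots h₁₂ h₂₃ hr₁ hr₂ hr₃⟩

theorem roots_real_or_complex
    (a c β : ℝ) (ha : 0 < a) (ha1 : a ≠ 1) (hc0 : 0 < c) (hc1 : c < 1)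
    (hβ0 : 0 < β) (hβ1 : β < 1)
    (γ1 γ2 : ℝ) (hlt : γ1 < γ2)
    (hq1 : quartic a c β γ1 = 0) (hq2 : quartic a c β γ2 = 0)
    (honly : ∀ x : ℝ, quartic a c β x = 0 → x = γ1 ∨ x = γ2)
    (hlam : zmap a c β γ1 < zmap a c β γ2) :
    (∀ z : ℝ, z ≠ 0 → (z < zmap a c β γ1 ∨ zmap a c β γ2 < z) →
      ∃ r1 r2 r3 : ℝ, r1 ≠ r2 ∧ r1 ≠ r3 ∧ r2 ≠ r3 ∧
        ∀ ξ : ℂ, cubicC a c β (z:ℂ) ξ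
          = (z:ℂ)*(a:ℂ)*(ξ - (r1:ℂ))*(ξ - (r2:ℂ))*(ξ - (r3:ℂ))) ∧
    (∀ z : ℝ, zmap a c β γ1 < z → z < zmap a c β γ2 →
      ∃ (r : ℝ) (w : ℂ), w.im ≠ 0 ∧
        ∀ ξ : ℂ, cubicC a c β (z:ℂ) ξ
          = (z:ℂ)*(a:ℂ)*(ξ - (r:ℂ))*(ξ - w)*(ξ - starRingEnd ℂ w)) :=
  roots_real_or_complex_general a c β ha ha1 hc0 hc1 hβ0 hβ1 γ1 γ2 hlt hq1 hq2 honly
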